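/- Introduction-qp to Introduction-pq typing for function types in pDOT: If Γ ⊢qp p : ∀(x:T)U for a path p and the typing context Γ is inert, then Γ ⊢pq p : ∀(x:T)U, i.e. p has the same function type under Introduction-pq typing. -/
import Mathlib


set_option autoImplicit true
set_option relaxedAutoImplicit true

namespace PDOT

/-! ## Syntax of pDOT -/

abbrev Var := String
abbrev TrmL := String   -- term member labels a, b, c
abbrev TypL := String   -- type member labels A, B, C

/-- Paths: a variable followed by zero or more field selections. -/
inductive Path : Type
  | var : Var → Path
  | sel : Path → TrmL → Path

/-- Types of pDOT. -/
inductive Typ : Type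
  | top : Typ                      -- ⊤
  | bot : Typ                      -- ⊥
  | fld : TrmL → Typ → Typ         -- {a : T}
  | dec : TypL → Typ → Typ → Typ   -- {A : S..T}
  | inter : Typ → Typ → Typ        -- S ∧ T
  | mu : Var → Typ → Typ           -- μ(x:T)
  | all : Var → Typ → Typ → Typ    -- ∀(x:S)T
  | psel : Path → TypL → Typ       -- p.A
  | sngl : Path → Typ              -- p.type

mutual
  /-- Terms. -/
  inductive Trm : Type
    | stbl : Stbl → Trm                -- stable term (path or value)
    | app : Path → Path → Trm          -- p q
    | lett : Var → Trm → Trm → Trm     -- let x = t in u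

  /-- Stable terms: paths or values. -/
  inductive Stbl : Type
    | path : Path → Stbl
    | val : Val → Stbl

  /-- Values. -/
  inductive Val : Type
    | obj : Var → Typ → Defs → Val     -- ν(x:T)d
    | lam : Var → Typ → Trm → Val      -- λ(x:T)t

  /-- A single definition. -/
  inductive Defn : Type
    | fld : TrmL → Stbl → Defn         -- {a = s}
    | typ : TypL → Typ → Defn          -- {A = T}

  /-- Aggregated definitions. -/
  inductive Defs : Type
    | one : Defn → Defs
    | anddef : Defs → Defs → Defs
end

/-! ## Substitution of a path for a variable -/

def substPath (x : Var) (p : Path) : Path → Path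
  | .var y => if y = x then p else .var y
  | .sel q a => .sel (substPath x p q) a

def substTyp (x : Var) (p : Path) : Typ → Typ
  | .top => .top
  | .bot => .bot
  | .fld a T => .fld a (substTyp x p T)
  | .dec A S U => .dec A (substTyp x p S) (substTyp x p U)
  | .inter S U => .inter (substTyp x p S) (substTyp x p U)
  | .mu y T => if y = x then .mu y T else .mu y (substTyp x p T)
  | .all y S T => if y = x then .all y (substTyp x p S) T
                  else .all y (substTyp x p S) (substTyp x p T)
  | .psel q A => .psel (substPath x p q) A
  | .sngl q => .sngl (substPath x p q)

mutual
  def substTrm (x : Var) (p : Path) : Trm → Trm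
    | .stbl s => .stbl (substStbl x p s)
    | .app q r => .app (substPath x p q) (substPath x p r)
    | .lett y t u => if y = x then .lett y (substTrm x p t) u
                     else .lett y (substTrm x p t) (substTrm x p u)

  def substStbl (x : Var) (p : Path) : Stbl → Stbl
    | .path q => .path (substPath x p q)
    | .val v => .val (substVal x p v)

  def substVal (x : Var) (p : Path) : Val → Val
    | .obj y T d => if y = x then .obj y T d
                    else .obj y (substTyp x p T) (substDefs x p d)
    | .lam y T t => if y = x then .lam y (substTyp x p T) t
                    else .lam y (substTyp x p T) (substTrm x p t)

  def substDefn (x : Var) (p : Path) : Defn → Defn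
    | .fld a s => .fld a (substStbl x p s)
    | .typ A T => .typ A (substTyp x p T)

  def substDefs (x : Var) (p : Path) : Defs → Defs
    | .one d => .one (substDefn x p d)
    | .anddef d1 d2 => .anddef (substDefs x p d1) (substDefs x p d2)
end

/-! ## Free variables and paths occurring in types -/

def freePath : Path → Set Var
  | .var x => {x}
  | .sel p _ => freePath p

def freeTyp : Typ → Set Var
  | .top => ∅
  | .bot => ∅
  | .fld _ T => freeTyp T
  | .dec _ S U => freeTyp S ∪ freeTyp U
  | .inter S U => freeTyp S ∪ freeTyp U
  | .mu y T => freeTyp T \ {y}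
  | .all y S T => freeTyp S ∪ (freeTyp T \ {y})
  | .psel p _ => freePath p
  | .sngl p => freePath p

/-- The paths occurring in a type. -/
def typPaths : Typ → Set Path
  | .top => ∅
  | .bot => ∅
  | .fld _ T => typPaths T
  | .dec _ S U => typPaths S ∪ typPaths U
  | .inter S U => typPaths S ∪ typPaths U
  | .mu _ T => typPaths T
  | .all _ S T => typPaths S ∪ typPaths T
  | .psel p _ => {p}
  | .sngl p => {p}

/-- `appendFields p bs` is the path `p.b̄`. -/
def appendFields : Path → List TrmL → Path
  | p, [] => p
  | p, a :: bs => appendFields (.sel p a) bs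

/-! ## The replacement operation `T[q/p] = U`:
one occurrence of a path with prefix `p` in `T` is replaced by the
corresponding path with prefix `q`, yielding `U`. -/

inductive Repl : Path → Path → Typ → Typ → Prop
  | psel (p q : Path) (bs : List TrmL) (A : TypL) :
      Repl p q (.psel (appendFields p bs) A) (.psel (appendFields q bs) A)
  | sngl (p q : Path) (bs : List TrmL) :
      Repl p q (.sngl (appendFields p bs)) (.sngl (appendFields q bs))
  | inter1 : Repl p q T1 T2 → Repl p q (.inter T1 U) (.inter T2 U)
  | inter2 : Repl p q T1 T2 → Repl p q (.inter U T1) (.inter U T2)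
  | mu : Repl p q T1 T2 → Repl p q (.mu x T1) (.mu x T2)
  | all1 : Repl p q T1 T2 → Repl p q (.all x T1 U) (.all x T2 U)
  | all2 : Repl p q T1 T2 → Repl p q (.all x U T1) (.all x U T2)
  | fld : Repl p q T1 T2 → Repl p q (.fld a T1) (.fld a T2)
  | dec1 : Repl p q T1 T2 → Repl p q (.dec A T1 U) (.dec A T2 U)
  | dec2 : Repl p q T1 T2 → Repl p q (.dec A U T1) (.dec A U T2)

/-! ## Contexts and environments -/

abbrev Ctx := List (Var × Typ)    -- typing context Γ
abbrev Env := List (Var × Val)    -- value environment γ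

def lookupCtx : Ctx → Var → Option Typ
  | [], _ => none
  | (y, T) :: Γ, x => if x = y then some T else lookupCtx Γ x

def lookupEnv : Env → Var → Option Val
  | [], _ => none
  | (y, v) :: γ, x => if x = y then some v else lookupEnv γ x

/-! ## Labels and domains of definitions -/

inductive Label : Type
  | trm : TrmL → Label
  | typ : TypL → Label

def defnLabel : Defn → Label
  | .fld a _ => .trm a
  | .typ A _ => .typ A

def defsDom : Defs → Set Label
  | .one d => {defnLabel d}
  | .anddef d1 d2 => defsDom d1 ∪ defsDom d2

/-- The tight-bounds condition `T tight`: all type members reachable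
through fields, recursion and intersection have equal bounds. -/
def tightBounds : Typ → Prop
  | .dec _ S U => S = U
  | .mu _ T => tightBounds T
  | .fld _ T => tightBounds T
  | .inter S U => tightBounds S ∧ tightBounds U
  | _ => True

/-! ## Typing and subtyping of pDOT -/

mutual
  /-- Term typing `Γ ⊢ t : T`. -/
  inductive HasTy : Ctx → Trm → Typ → Prop
    | var : lookupCtx Γ x = some T → HasTy Γ (.stbl (.path (.var x))) T
    | all_i : HasTy ((x, T) :: Γ) t U → x ∉ freeTyp T →
        HasTy Γ (.stbl (.val (.lam x T t))) (.all x T U)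
    | all_e : HasTy Γ (.stbl (.path p)) (.all z S T) →
        HasTy Γ (.stbl (.path q)) S →
        HasTy Γ (.app p q) (substTyp z q T)
    | new_i : DefsTy (.var x) ((x, T) :: Γ) d T →
        HasTy Γ (.stbl (.val (.obj x T d))) (.mu x T)
    | fld_e : HasTy Γ (.stbl (.path p)) (.fld a T) →
        HasTy Γ (.stbl (.path (.sel p a))) T
    | fld_i : HasTy Γ (.stbl (.path (.sel p a))) T →
        HasTy Γ (.stbl (.path p)) (.fld a T)
    | lett : HasTy Γ t T → HasTy ((x, T) :: Γ) u U → x ∉ freeTyp U →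
        HasTy Γ (.lett x t u) U
    | sngl_trans : HasTy Γ (.stbl (.path p)) (.sngl q) →
        HasTy Γ (.stbl (.path q)) T →
        HasTy Γ (.stbl (.path p)) T
    | sngl_e : HasTy Γ (.stbl (.path p)) (.sngl q) →
        HasTy Γ (.stbl (.path (.sel q a))) U →
        HasTy Γ (.stbl (.path (.sel p a))) (.sngl (.sel q a))
    | rec_i : HasTy Γ (.stbl (.path p)) (substTyp x p T) →
        HasTy Γ (.stbl (.path p)) (.mu x T)
    | rec_e : HasTy Γ (.stbl (.path p)) (.mu x T) →
        HasTy Γ (.stbl (.path p)) (substTyp x p T)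
    | and_i : HasTy Γ (.stbl (.path p)) T → HasTy Γ (.stbl (.path p)) U →
        HasTy Γ (.stbl (.path p)) (.inter T U)
    | sub : HasTy Γ t T → Subtyp Γ T U → HasTy Γ t U

  /-- Definition typing `p; Γ ⊢ d : T` (the path `p` is the identity of
  the enclosing object). -/
  inductive DefsTy : Path → Ctx → Defs → Typ → Prop
    | def_typ : DefsTy p Γ (.one (.typ A T)) (.dec A T T)
    | def_all : HasTy Γ (.stbl (.val (.lam x T t))) (.all x U V) →
        DefsTy p Γ (.one (.fld a (.val (.lam x T t)))) (.fld a (.all x U V))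
    | def_new :
        DefsTy (.sel p a) Γ (substDefs y (.sel p a) d) (substTyp y (.sel p a) T) →
        tightBounds T →
        DefsTy p Γ (.one (.fld a (.val (.obj y T d)))) (.fld a (.mu y T))
    | def_path : HasTy Γ (.stbl (.path q)) U →
        DefsTy p Γ (.one (.fld a (.path q))) (.fld a (.sngl q))
    | def_and : DefsTy p Γ d1 T1 → DefsTy p Γ d2 T2 →
        Disjoint (defsDom d1) (defsDom d2) →
        DefsTy p Γ (.anddef d1 d2) (.inter T1 T2)

  /-- Subtyping `Γ ⊢ T <: U`. -/
  inductive Subtyp : Ctx → Typ → Typ → Prop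
    | top : Subtyp Γ T .top
    | bot : Subtyp Γ .bot T
    | refl : Subtyp Γ T T
    | trans : Subtyp Γ S T → Subtyp Γ T U → Subtyp Γ S U
    | and1 : Subtyp Γ (.inter T U) T
    | and2 : Subtyp Γ (.inter T U) U
    | and_i : Subtyp Γ S T → Subtyp Γ S U → Subtyp Γ S (.inter T U)
    | fld : Subtyp Γ T U → Subtyp Γ (.fld a T) (.fld a U)
    | dec : Subtyp Γ S2 S1 → Subtyp Γ T1 T2 →
        Subtyp Γ (.dec A S1 T1) (.dec A S2 T2)
    | sel_lo : HasTy Γ (.stbl (.path p)) (.dec A S T) → Subtyp Γ S (.psel p A)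
    | sel_hi : HasTy Γ (.stbl (.path p)) (.dec A S T) → Subtyp Γ (.psel p A) T
    | sngl_pq : HasTy Γ (.stbl (.path p)) (.sngl q) →
        HasTy Γ (.stbl (.path q)) U → Repl p q T T' → Subtyp Γ T T'
    | sngl_qp : HasTy Γ (.stbl (.path p)) (.sngl q) →
        HasTy Γ (.stbl (.path q)) U → Repl q p T T' → Subtyp Γ T T'
    | all : Subtyp Γ S2 S1 → Subtyp ((x, S2) :: Γ) T1 T2 →
        Subtyp Γ (.all x S1 T1) (.all x S2 T2)
end

/-! ## Path lookup in a value environment -/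

/-- Membership of a field definition in an aggregate definition. -/
inductive DefsHas : Defs → TrmL → Stbl → Prop
  | one : DefsHas (.one (.fld a s)) a s
  | left : DefsHas d1 a s → DefsHas (.anddef d1 d2) a s
  | right : DefsHas d2 a s → DefsHas (.anddef d1 d2) a s

mutual
  /-- Single-step path lookup `γ ⊢ s ⤳ s′`. -/
  inductive LookupStep : Env → Stbl → Stbl → Prop
    | var : lookupEnv γ x = some v → LookupStep γ (.path (.var x)) (.val v)
    | obj : Lookups γ (.path p) (.val (.obj x T d)) → DefsHas d a s →
        LookupStep γ (.path (.sel p a)) (substStbl x p s)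
    | selc : LookupStep γ (.path p) (.path q) →
        LookupStep γ (.path (.sel p a)) (.path (.sel q a))

  /-- Reflexive, transitive closure `γ ⊢ s ⤳* s′` of path lookup. -/
  inductive Lookups : Env → Stbl → Stbl → Prop
    | refl : Lookups γ s s
    | step : LookupStep γ s1 s2 → Lookups γ s2 s3 → Lookups γ s1 s3
end

/-! ## Operational semantics -/

/-- Reduction `(γ | t) ⟼ (γ′ | t′)`. -/
inductive Red : Env → Trm → Env → Trm → Prop
  | apply : Lookups γ (.path p) (.val (.lam z T t)) →
      Red γ (.app p q) γ (substTrm z q t)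
  | let_path : Red γ (.lett x (.stbl (.path p)) u) γ (substTrm x p u)
  | let_val : lookupEnv γ x = none →
      Red γ (.lett x (.stbl (.val v)) u) ((x, v) :: γ) u
  | ctx : Red γ t γ' t' → Red γ (.lett x t u) γ' (.lett x t' u)

/-- Reduction on configurations. -/
def Red2 : Env × Trm → Env × Trm → Prop := fun c c' => Red c.1 c.2 c'.1 c'.2

/-- Multi-step reduction `⟼*`. -/
def Reds : Env × Trm → Env × Trm → Prop := Relation.ReflTransGen Red2

/-- A term diverges if there is an infinite reduction sequence starting
from it in the empty environment. -/
def Diverges (t : Trm) : Prop :=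
  ∃ f : ℕ → Env × Trm, f 0 = ([], t) ∧ ∀ n, Red2 (f n) (f (n + 1))

/-- Normal forms: paths and values (i.e. stable terms). -/
def NormalForm : Trm → Prop
  | .stbl _ => True
  | _ => False

/-- Extended reduction `(γ | t) ↪ (γ′ | t′)`: either a reduction step
or a path-lookup step on a stable term. -/
inductive ExtRed : Env → Trm → Env → Trm → Prop
  | red : Red γ t γ' t' → ExtRed γ t γ' t'
  | lookup : LookupStep γ s s' → ExtRed γ (.stbl s) γ (.stbl s')

def ExtRed2 : Env × Trm → Env × Trm → Prop := fun c c' => ExtRed c.1 c.2 c'.1 c'.2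

/-- Multi-step extended reduction `↪*`. -/
def ExtReds : Env × Trm → Env × Trm → Prop := Relation.ReflTransGen ExtRed2

def ExtDiverges (t : Trm) : Prop :=
  ∃ f : ℕ → Env × Trm, f 0 = ([], t) ∧ ∀ n, ExtRed2 (f n) (f (n + 1))

/-! ## Inert types and contexts, well-formedness, correspondence -/

mutual
  /-- Inert types. -/
  inductive InertTyp : Typ → Prop
    | all : InertTyp (.all x S T)
    | mu : RecordTyp T → InertTyp (.mu x T)

  /-- Record types: intersections of declarations where type members have
  equal bounds and fields have singleton or inert types. -/
  inductive RecordTyp : Typ → Prop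
    | dec : RecordTyp (.dec A T T)
    | fld_sngl : RecordTyp (.fld a (.sngl q))
    | fld : InertTyp T → RecordTyp (.fld a T)
    | inter : RecordTyp T → RecordTyp U → RecordTyp (.inter T U)
end

/-- A typing context is inert if all types it assigns are inert. -/
def InertCtx (Γ : Ctx) : Prop := ∀ xT ∈ Γ, InertTyp xT.2

/-- A typing context is well-formed if every path occurring in a type in
it is typeable in the context. -/
def WfCtx (Γ : Ctx) : Prop :=
  ∀ xT ∈ Γ, ∀ p ∈ typPaths xT.2, ∃ U, HasTy Γ (.stbl (.path p)) U

/-- Auxiliary relation for `Γ ~ γ`: the bindings match up pointwise and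
each value has the corresponding type in the full context `Γ0`. -/
inductive CorrAux (Γ0 : Ctx) : Ctx → Env → Prop
  | nil : CorrAux Γ0 [] []
  | cons : HasTy Γ0 (.stbl (.val v)) T → CorrAux Γ0 Γ γ →
      CorrAux Γ0 ((x, T) :: Γ) ((x, v) :: γ)

/-- Correspondence `Γ ~ γ`: `γ = (xᵢ ↦ vᵢ)`, `Γ = (xᵢ : Tᵢ)`, and
`Γ ⊢ vᵢ : Tᵢ` for each `i`. -/
def Corresponds (Γ : Ctx) (γ : Env) : Prop := CorrAux Γ Γ γ

/-! ## Elimination (precise) typing for paths -/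

/-- Elimination-I (precise) typing `Γ ⊢! p : T`. -/
inductive Prec1 : Ctx → Path → Typ → Prop
  | var : lookupCtx Γ x = some T → Prec1 Γ (.var x) T
  | rec_e : Prec1 Γ p (.mu x T) → Prec1 Γ p (substTyp x p T)
  | and1_e : Prec1 Γ p (.inter T U) → Prec1 Γ p T
  | and2_e : Prec1 Γ p (.inter T U) → Prec1 Γ p U
  | fld_e : Prec1 Γ p (.fld a T) → Prec1 Γ (.sel p a) T

/-- Elimination-II typing `Γ ⊢!! p : T`. -/
inductive Prec2 : Ctx → Path → Typ → Prop
  | from1 : Prec1 Γ p T → Prec2 Γ p T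
  | sngl_e : Prec2 Γ p (.sngl q) → Prec2 Γ (.sel q a) U →
      Prec2 Γ (.sel p a) (.sngl (.sel q a))

/-- Elimination-III typing `Γ ⊢!!! p : T`. -/
inductive Prec3 : Ctx → Path → Typ → Prop
  | from2 : Prec2 Γ p T → Prec3 Γ p T
  | sngl_trans : Prec2 Γ p (.sngl q) → Prec3 Γ q U → Prec3 Γ p U

/-! ## Tight typing and tight subtyping -/

mutual
  /-- Tight term typing `Γ ⊢# t : T`. -/
  inductive TightTy : Ctx → Trm → Typ → Prop
    | var : lookupCtx Γ x = some T → TightTy Γ (.stbl (.path (.var x))) T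
    | all_i : HasTy ((x, T) :: Γ) t U → x ∉ freeTyp T →
        TightTy Γ (.stbl (.val (.lam x T t))) (.all x T U)
    | all_e : TightTy Γ (.stbl (.path p)) (.all z S T) →
        TightTy Γ (.stbl (.path q)) S →
        TightTy Γ (.app p q) (substTyp z q T)
    | new_i : DefsTy (.var x) ((x, T) :: Γ) d T →
        TightTy Γ (.stbl (.val (.obj x T d))) (.mu x T)
    | fld_e : TightTy Γ (.stbl (.path p)) (.fld a T) →
        TightTy Γ (.stbl (.path (.sel p a))) T
    | fld_i : TightTy Γ (.stbl (.path (.sel p a))) T →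
        TightTy Γ (.stbl (.path p)) (.fld a T)
    | lett : TightTy Γ t T → HasTy ((x, T) :: Γ) u U → x ∉ freeTyp U →
        TightTy Γ (.lett x t u) U
    | sngl_trans : TightTy Γ (.stbl (.path p)) (.sngl q) →
        HasTy Γ (.stbl (.path q)) T →
        TightTy Γ (.stbl (.path p)) T
    | sngl_e : TightTy Γ (.stbl (.path p)) (.sngl q) →
        TightTy Γ (.stbl (.path (.sel q a))) U →
        TightTy Γ (.stbl (.path (.sel p a))) (.sngl (.sel q a))
    | rec_i : TightTy Γ (.stbl (.path p)) (substTyp x p T) →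
        TightTy Γ (.stbl (.path p)) (.mu x T)
    | rec_e : TightTy Γ (.stbl (.path p)) (.mu x T) →
        TightTy Γ (.stbl (.path p)) (substTyp x p T)
    | and_i : TightTy Γ (.stbl (.path p)) T → TightTy Γ (.stbl (.path p)) U →
        TightTy Γ (.stbl (.path p)) (.inter T U)
    | sub : TightTy Γ t T → TightSub Γ T U → TightTy Γ t U

  /-- Tight subtyping `Γ ⊢# T <: U`. -/
  inductive TightSub : Ctx → Typ → Typ → Prop
    | top : TightSub Γ T .top
    | bot : TightSub Γ .bot T
    | refl : TightSub Γ T T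
    | trans : TightSub Γ S T → TightSub Γ T U → TightSub Γ S U
    | and1 : TightSub Γ (.inter T U) T
    | and2 : TightSub Γ (.inter T U) U
    | and_i : TightSub Γ S T → TightSub Γ S U → TightSub Γ S (.inter T U)
    | fld : TightSub Γ T U → TightSub Γ (.fld a T) (.fld a U)
    | dec : TightSub Γ S2 S1 → TightSub Γ T1 T2 →
        TightSub Γ (.dec A S1 T1) (.dec A S2 T2)
    | sel_lo : Prec3 Γ p (.dec A S S) → TightSub Γ S (.psel p A)
    | sel_hi : Prec3 Γ p (.dec A S S) → TightSub Γ (.psel p A) S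
    | sngl_pq : Prec3 Γ p (.sngl q) → Prec2 Γ q U → Repl p q T T' →
        TightSub Γ T T'
    | sngl_qp : Prec3 Γ p (.sngl q) → Prec2 Γ q U → Repl q p T T' →
        TightSub Γ T T'
    | all : TightSub Γ S2 S1 → Subtyp ((x, S2) :: Γ) T1 T2 →
        TightSub Γ (.all x S1 T1) (.all x S2 T2)
end

/-! ## Introduction-pq (invertible) typing for paths -/

inductive IntroPQ : Ctx → Path → Typ → Prop
  | path : Prec3 Γ p T → IntroPQ Γ p T
  | fld : IntroPQ Γ p (.fld a S) → TightSub Γ S T → IntroPQ Γ p (.fld a T)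
  | dec : IntroPQ Γ p (.dec A T U) → TightSub Γ T' T → TightSub Γ U U' →
      IntroPQ Γ p (.dec A T' U')
  | all : IntroPQ Γ p (.all x S T) → TightSub Γ S' S →
      Subtyp ((x, S') :: Γ) T T' → IntroPQ Γ p (.all x S' T')
  | and_i : IntroPQ Γ p S → IntroPQ Γ p T → IntroPQ Γ p (.inter S T)
  | top : IntroPQ Γ p T → IntroPQ Γ p .top
  | sngl_mu : IntroPQ Γ r (.mu x T) → Prec1 Γ p (.sngl q) → Prec2 Γ q U →
      Repl p q (.mu x T) S → IntroPQ Γ r S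
  | sngl_sel : IntroPQ Γ r (.psel r' A) → Prec1 Γ p (.sngl q) → Prec2 Γ q U →
      Repl p q (.psel r' A) S → IntroPQ Γ r S
  | sngl_sngl : IntroPQ Γ r (.sngl r') → Prec1 Γ p (.sngl q) → Prec2 Γ q U →
      Repl p q (.sngl r') S → IntroPQ Γ r S

/-! ## Introduction-qp typing for paths -/

inductive IntroQP : Ctx → Path → Typ → Prop
  | path : IntroPQ Γ p T → IntroQP Γ p T
  | and_i : IntroQP Γ p S → IntroQP Γ p T → IntroQP Γ p (.inter S T)
  | rec_i : IntroQP Γ p (substTyp x p T) → IntroQP Γ p (.mu x T)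
  | fld_i : IntroQP Γ (.sel p a) T → IntroQP Γ p (.fld a T)
  | typ_sel : IntroQP Γ p T → Prec1 Γ q (.dec A T T) → IntroQP Γ p (.psel q A)
  | sngl_mu : IntroQP Γ r (.mu x T) → Prec1 Γ p (.sngl q) → Prec2 Γ q U →
      Repl q p (.mu x T) S → IntroQP Γ r S
  | sngl_sel : IntroQP Γ r (.psel r' A) → Prec1 Γ p (.sngl q) → Prec2 Γ q U →
      Repl q p (.psel r' A) S → IntroQP Γ r S
  | sngl_sngl : IntroQP Γ r (.sngl r') → Prec1 Γ p (.sngl q) → Prec2 Γ q U →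
      Repl q p (.sngl r') S → IntroQP Γ r S

end PDOT

namespace PDOT

/-- **Introduction-qp to Introduction-pq typing for function types in pDOT**:
if `Γ ⊢qp p : ∀(x:T)U` and `Γ` is inert, then `Γ ⊢pq p : ∀(x:T)U`. -/
theorem intro_qp_to_intro_pq (Γ : Ctx) (p : Path) (x : Var) (T U : Typ)
    (hty : IntroQP Γ p (.all x T U)) (hinert : InertCtx Γ) :
    IntroPQ Γ p (.all x T U) := by
  cases hty with
  | path h => exact h
  | sngl_mu _ _ _ hr => cases hr
  | sngl_sel _ _ _ hr => cases hr
  | sngl_sngl _ _ _ hr => cases hr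

end PDOT
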